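/- Let B be a distribution function of a nonnegative random variable with B(0) < 1, let T > 0, and let f and fⁿ (n ≥ 1) be Borel functions from ℝ × [0,∞) to ℝ, each satisfying |g(y,t)| ≤ |y| and |g(y₁,t) − g(y₂,t)| ≤ |y₁ − y₂|. Let x and xⁿ be bounded Borel functions on [0,T], and let y and yⁿ be the unique bounded Borel solutions of y(t) = x(t) + ∫₀ᵗ f(y(t−s), t−s) dB(s) and yⁿ(t) = xⁿ(t) + ∫₀ᵗ fⁿ(yⁿ(t−s), t−s) dB(s), t ∈ [0,T]. If sup_{t∈[0,T]} ∫₀ᵗ |fⁿ(y(t−s), t−s) − f(y(t−s), t−s)| dB(s) → 0 and sup_{t∈[0,T]} |xⁿ(t) − x(t)| → 0 as n → ∞, then sup_{t∈[0,T]} |yⁿ(t) − y(t)| → 0 as n → ∞. -/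

import Mathlib

open MeasureTheory Filter Set Topology

/-- `B` is the distribution function of a nonnegative random variable:
it vanishes on the negatives and tends to `1` at infinity. -/
def IsNNDistFun (B : StieltjesFunction ℝ) : Prop :=
  (∀ x < (0 : ℝ), B x = 0) ∧ Tendsto B atTop (nhds 1)

/-- `y` is a bounded Borel solution on `[0,T]` of the convolution equation
`y(t) = x(t) + ∫₀ᵗ f(y(t-s), t-s) dB(s)`. -/
def SolvesConv (B : StieltjesFunction ℝ) (T : ℝ) (x : ℝ → ℝ) (f : ℝ → ℝ → ℝ)
    (y : ℝ → ℝ) : Prop :=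
  Measurable (fun t : Set.Icc (0 : ℝ) T => y t) ∧
  (∃ C : ℝ, ∀ t ∈ Set.Icc (0 : ℝ) T, |y t| ≤ C) ∧
  ∀ t ∈ Set.Icc (0 : ℝ) T,
    y t = x t + ∫ s in Set.Icc (0 : ℝ) t, f (y (t - s)) (t - s) ∂B.measure

/-- `g` is a Borel function on `ℝ × [0,∞)` satisfying `|g(y,t)| ≤ |y|` and the Lipschitz
condition `|g(y₁,t) − g(y₂,t)| ≤ |y₁ − y₂|`. -/
def GoodKernel (g : ℝ → ℝ → ℝ) : Prop :=
  Measurable (Function.uncurry g) ∧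
  (∀ (y t : ℝ), 0 ≤ t → |g y t| ≤ |y|) ∧
  (∀ (y₁ y₂ t : ℝ), 0 ≤ t → |g y₁ t - g y₂ t| ≤ |y₁ - y₂|)

/-!
The difference `Δ = |yⁿ - y|` satisfies the renewal inequality
`Δ(t) ≤ ηₙ + ∫₀ᵗ Δ(t - s) dB(s)`, where `ηₙ` collects the two assumed uniform errors and the
remaining term comes from `fⁿ` being `1`-Lipschitz. Since `B(0) < 1`, some `δ > 0` has
`θ = B(δ) < 1`. On `[0, (k+1)δ)` the part of the integral over `s ≤ δ` is at most `θ` times the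
supremum of `Δ` there, while the part over `s > δ` only sees `Δ` on `[0, kδ)`; absorbing the
first part gives a linear recursion for these suprema, and after `⌈T/δ⌉` steps `Δ ≤ C ηₙ` on
`[0,T]` with `C` depending only on `B` and `T`.
-/
lemma setIntegral_le_mul_measureReal_add_mul {α : Type*} [MeasurableSpace α] {μ : Measure α}
    [IsFiniteMeasure μ] {S A : Set α} (hS : MeasurableSet S)
    (hA : MeasurableSet A) {g : α → ℝ} (hg : IntegrableOn g S μ) {Q P : ℝ} (hQ0 : 0 ≤ Q)
    (hP0 : 0 ≤ P) (hQ : ∀ s ∈ S, s ∈ A → g s ≤ Q) (hP : ∀ s ∈ S, s ∉ A → g s ≤ P) :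
    ∫ s in S, g s ∂μ ≤ Q * μ.real A + P * μ.real univ := by
  have hbound : Integrable (fun s => A.indicator (fun _ => Q) s + P) (μ.restrict S) :=
    ((integrable_const Q).indicator hA).add (integrable_const P)
  calc ∫ s in S, g s ∂μ ≤ ∫ s in S, (A.indicator (fun _ => Q) s + P) ∂μ := by
        refine setIntegral_mono_on hg hbound hS fun s hs => ?_
        by_cases hsA : s ∈ A
        · simpa [hsA] using (hQ s hs hsA).trans (le_add_of_nonneg_right hP0)
        · simpa [hsA] using hP s hs hsA
    _ = Q * μ.real (A ∩ S) + P * μ.real S := by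
        rw [integral_add ((integrable_const Q).indicator hA) (integrable_const P),
          integral_indicator_const _ hA, setIntegral_const, measureReal_restrict_apply hA]
        simp only [smul_eq_mul, mul_comm]
    _ ≤ Q * μ.real A + P * μ.real univ := by
        exact add_le_add (mul_le_mul_of_nonneg_left (measureReal_mono inter_subset_left) hQ0)
          (mul_le_mul_of_nonneg_left (measureReal_mono (subset_univ S)) hP0)

lemma integrableOn_Icc_comp_sub {μ : Measure ℝ} [IsLocallyFiniteMeasure μ] {h : ℝ → ℝ}
    (hh : Measurable h) {t C : ℝ} (hC : ∀ u ∈ Icc 0 t, |h u| ≤ C) :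
    IntegrableOn (fun s => h (t - s)) (Icc 0 t) μ :=
  Measure.integrableOn_of_bounded measure_Icc_lt_top.ne
    (hh.comp (measurable_const.sub measurable_id)).aestronglyMeasurable
    ((ae_restrict_iff' measurableSet_Icc).2 <| ae_of_all _ fun s hs =>
      hC _ ⟨by linarith [hs.2], by linarith [hs.1]⟩)

section Renewal

variable {μ : Measure ℝ} [IsFiniteMeasure μ]

lemma exists_pos_measureReal_Icc_lt_one (h : μ {0} < 1) : ∃ δ > 0, μ.real (Icc 0 δ) < 1 := by
  obtain ⟨δ, hδ1, hδ⟩ := (((tendsto_measure_Icc_nhdsWithin_right' μ 0).eventually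
    (gt_mem_nhds h)).and self_mem_nhdsWithin).exists
  refine ⟨δ, hδ, ENNReal.toReal_lt_of_lt_ofReal ?_⟩
  rw [ENNReal.ofReal_one]
  have hδ0 : (0 : ℝ) - δ ≤ 0 := by linarith [show (0 : ℝ) < δ from hδ]
  exact (measure_mono (Icc_subset_Icc hδ0 (by simp))).trans_lt hδ1

/-- `renewalBound θ m (k + 1)` is the largest `Q` with `Q ≤ 1 + θ Q + m renewalBound θ m k`. -/
noncomputable def renewalBound (θ m : ℝ) : ℕ → ℝ
  | 0 => 0
  | k + 1 => (1 + m * renewalBound θ m k) / (1 - θ)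

lemma renewalBound_nonneg {θ m : ℝ} (hθ : θ < 1) (hm : 0 ≤ m) (k : ℕ) :
    0 ≤ renewalBound θ m k := by
  induction k with
  | zero => exact le_rfl
  | succ k ih => exact div_nonneg (by positivity) (by linarith)

lemma le_add_mul_add_mul_of_le_add_integral {Δ : ℝ → ℝ} (hΔ : Measurable Δ)
    {η δ t Q P : ℝ} (ht : 0 ≤ t) (hΔt : Δ t ≤ η + ∫ s in Icc 0 t, Δ (t - s) ∂μ)
    (hΔ0 : ∀ u ∈ Icc 0 t, 0 ≤ Δ u) (hQ : ∀ u ∈ Icc 0 t, Δ u ≤ Q) (hP0 : 0 ≤ P)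
    (hP : ∀ u ∈ Icc 0 t, u < t - δ → Δ u ≤ P) :
    Δ t ≤ η + Q * μ.real (Icc 0 δ) + P * μ.real univ := by
  have hmem : ∀ s ∈ Icc 0 t, t - s ∈ Icc 0 t := fun s hs =>
    ⟨by linarith [hs.2], by linarith [hs.1]⟩
  have hint : IntegrableOn (fun s => Δ (t - s)) (Icc 0 t) μ :=
    integrableOn_Icc_comp_sub hΔ fun u hu => (abs_of_nonneg (hΔ0 u hu)).trans_le (hQ u hu)
  have hsplit := setIntegral_le_mul_measureReal_add_mul (A := Icc 0 δ) measurableSet_Icc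
    measurableSet_Icc hint ((hΔ0 t ⟨ht, le_rfl⟩).trans (hQ t ⟨ht, le_rfl⟩)) hP0
    (fun s hs _ => hQ _ (hmem s hs))
    (fun s hs hsδ => hP _ (hmem s hs) <| by
      simp only [mem_Icc, not_and, not_le] at hsδ
      linarith [hsδ hs.1])
  linarith

lemma le_renewalBound_mul {Δ : ℝ → ℝ} (hΔ : Measurable Δ) {η δ T : ℝ}
    (hθ : μ.real (Icc 0 δ) < 1) (hη : 0 ≤ η) (hΔ0 : ∀ u ∈ Icc 0 T, 0 ≤ Δ u)
    (hΔb : BddAbove (Δ '' Icc 0 T))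
    (hrenewal : ∀ t ∈ Icc 0 T, Δ t ≤ η + ∫ s in Icc 0 t, Δ (t - s) ∂μ) (k : ℕ) :
    ∀ t ∈ Icc 0 T, t < k * δ →
      Δ t ≤ renewalBound (μ.real (Icc 0 δ)) (μ.real univ) k * η := by
  induction k with
  | zero =>
    intro t ht hlt
    simp only [CharP.cast_eq_zero, zero_mul] at hlt
    linarith [ht.1]
  | succ k ih =>
    set θ := μ.real (Icc 0 δ)
    set m := μ.real univ
    have hc := renewalBound_nonneg hθ (measureReal_nonneg : 0 ≤ m) k
    set Q := sSup (Δ '' (Icc 0 T ∩ Iio ((k + 1 : ℕ) * δ)))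
    have hΔQ : ∀ t ∈ Icc 0 T, t < (k + 1 : ℕ) * δ → Δ t ≤ Q := fun t ht hlt =>
      le_csSup (hΔb.mono (image_mono inter_subset_left)) ⟨t, ⟨ht, hlt⟩, rfl⟩
    have hQ0 : 0 ≤ Q := Real.sSup_nonneg fun _ ⟨t, ht, hΔt⟩ => hΔt ▸ hΔ0 t ht.1
    have hQ : Q ≤ η + Q * θ + renewalBound θ m k * η * m := by
      refine Real.sSup_le ?_ (by positivity)
      rintro _ ⟨t, ⟨ht, hlt⟩, rfl⟩
      have hsub : ∀ u ∈ Icc 0 t, u ∈ Icc 0 T := fun u hu => Icc_subset_Icc_right ht.2 hu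
      exact le_add_mul_add_mul_of_le_add_integral hΔ ht.1 (hrenewal t ht)
        (fun u hu => hΔ0 u (hsub u hu))
        (fun u hu => hΔQ u (hsub u hu) (hu.2.trans_lt hlt)) (by positivity)
        (fun u hu hut => ih u (hsub u hu) <| by
          rw [mem_Iio] at hlt
          push_cast at hlt
          linarith)
    intro t ht hlt
    calc Δ t ≤ Q := hΔQ t ht hlt
      _ ≤ renewalBound θ m (k + 1) * η := by
        rw [renewalBound, div_mul_eq_mul_div, le_div_iff₀ (by linarith)]
        nlinarith

theorem exists_le_mul_of_le_add_setIntegral_sub (hμ0 : μ {0} < 1) (T : ℝ) :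
    ∃ C ≥ 0, ∀ (η : ℝ) (Δ : ℝ → ℝ), 0 ≤ η → Measurable Δ → (∀ u ∈ Icc 0 T, 0 ≤ Δ u) →
      BddAbove (Δ '' Icc 0 T) →
      (∀ t ∈ Icc 0 T, Δ t ≤ η + ∫ s in Icc 0 t, Δ (t - s) ∂μ) →
      ∀ t ∈ Icc 0 T, Δ t ≤ C * η := by
  obtain ⟨δ, hδ, hθ⟩ := exists_pos_measureReal_Icc_lt_one hμ0
  obtain ⟨K, hK⟩ := exists_nat_gt (T / δ)
  refine ⟨_, renewalBound_nonneg hθ measureReal_nonneg K, fun η Δ hη hΔ hΔ0 hΔb hrenewal t ht =>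
    le_renewalBound_mul hΔ hθ hη hΔ0 hΔb hrenewal K t ht ?_⟩
  rw [div_lt_iff₀ hδ] at hK
  linarith [ht.2]

end Renewal

lemma IsNNDistFun.tendsto_atBot {B : StieltjesFunction ℝ} (hB : IsNNDistFun B) :
    Tendsto B atBot (𝓝 0) :=
  tendsto_const_nhds.congr' <| (eventually_lt_atBot 0).mono fun u hu => (hB.1 u hu).symm

lemma IsNNDistFun.isProbabilityMeasure {B : StieltjesFunction ℝ} (hB : IsNNDistFun B) :
    IsProbabilityMeasure B.measure :=
  B.isProbabilityMeasure hB.tendsto_atBot hB.2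

lemma IsNNDistFun.measure_singleton_zero_lt_one {B : StieltjesFunction ℝ} (hB : IsNNDistFun B)
    (hB0 : B 0 < 1) : B.measure {0} < 1 := by
  refine (measure_mono (show ({0} : Set ℝ) ⊆ Iic 0 by simp)).trans_lt ?_
  rw [B.measure_Iic hB.tendsto_atBot, sub_zero, ENNReal.ofReal_lt_one]
  exact hB0

lemma GoodKernel.measurable_comp {f : ℝ → ℝ → ℝ} (hf : GoodKernel f) {y : ℝ → ℝ}
    (hy : Measurable y) : Measurable fun u => f (y u) u :=
  hf.1.comp (hy.prodMk measurable_id)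

section SolvesConv

variable {B : StieltjesFunction ℝ} {T : ℝ} {x w : ℝ → ℝ} {f g : ℝ → ℝ → ℝ} {y z : ℝ → ℝ}

lemma setIntegral_Icc_indicator_comp_sub (μ : Measure ℝ) (F : ℝ → ℝ → ℝ) (y : ℝ → ℝ) {t : ℝ}
    (ht : t ∈ Icc 0 T) :
    ∫ s in Icc 0 t, F ((Icc 0 T).indicator y (t - s)) (t - s) ∂μ =
      ∫ s in Icc 0 t, F (y (t - s)) (t - s) ∂μ :=
  setIntegral_congr_fun measurableSet_Icc fun s hs => by
    have hts : t - s ∈ Icc 0 T := ⟨by linarith [hs.2], by linarith [hs.1, ht.2]⟩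
    rw [indicator_of_mem hts]

lemma SolvesConv.indicator (hy : SolvesConv B T x f y) :
    SolvesConv B T x f ((Icc 0 T).indicator y) := by
  obtain ⟨hym, ⟨C, hC⟩, hyeq⟩ := hy
  refine ⟨?_, ⟨C, fun t ht => ?_⟩, fun t ht => ?_⟩
  · simpa only [indicator_of_mem (Subtype.prop _)] using hym
  · simpa only [indicator_of_mem ht] using hC t ht
  · rw [indicator_of_mem ht, setIntegral_Icc_indicator_comp_sub _ f y ht]
    exact hyeq t ht

lemma SolvesConv.measurable_indicator (hy : SolvesConv B T x f y) :
    Measurable ((Icc 0 T).indicator y) := by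
  refine measurable_of_restrict_of_restrict_compl (s := Icc 0 T) measurableSet_Icc ?_ ?_
  · convert hy.1 using 1
    ext t
    exact indicator_of_mem t.2 y
  · convert measurable_const (a := (0 : ℝ)) using 1
    ext t
    exact indicator_of_notMem t.2 y

lemma SolvesConv.bddAbove_abs_sub (hy : SolvesConv B T x f y) (hz : SolvesConv B T w g z) :
    BddAbove ((fun u => |z u - y u|) '' Icc 0 T) := by
  obtain ⟨Cy, hCy⟩ := hy.2.1
  obtain ⟨Cz, hCz⟩ := hz.2.1
  refine ⟨Cz + Cy, ?_⟩
  rintro _ ⟨u, hu, rfl⟩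
  exact (abs_sub _ _).trans (add_le_add (hCz u hu) (hCy u hu))

lemma SolvesConv.abs_sub_le_add_integral (hy : SolvesConv B T x f y) (hz : SolvesConv B T w g z)
    (hf : GoodKernel f) (hg : GoodKernel g) (hym : Measurable y) (hzm : Measurable z) {t : ℝ}
    (ht : t ∈ Icc 0 T) :
    |z t - y t| ≤ |w t - x t|
      + ∫ s in Icc 0 t, |g (y (t - s)) (t - s) - f (y (t - s)) (t - s)| ∂B.measure
      + ∫ s in Icc 0 t, |z (t - s) - y (t - s)| ∂B.measure := by
  obtain ⟨Cy, hCy⟩ := hy.2.1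
  obtain ⟨Cz, hCz⟩ := hz.2.1
  have hsub : ∀ u ∈ Icc 0 t, u ∈ Icc 0 T := fun u hu => Icc_subset_Icc_right ht.2 hu
  have hfy : IntegrableOn (fun s => f (y (t - s)) (t - s)) (Icc 0 t) B.measure :=
    integrableOn_Icc_comp_sub (hf.measurable_comp hym) fun u hu =>
      (hf.2.1 _ _ hu.1).trans (hCy u (hsub u hu))
  have hgy : IntegrableOn (fun s => g (y (t - s)) (t - s)) (Icc 0 t) B.measure :=
    integrableOn_Icc_comp_sub (hg.measurable_comp hym) fun u hu =>
      (hg.2.1 _ _ hu.1).trans (hCy u (hsub u hu))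
  have hgz : IntegrableOn (fun s => g (z (t - s)) (t - s)) (Icc 0 t) B.measure :=
    integrableOn_Icc_comp_sub (hg.measurable_comp hzm) fun u hu =>
      (hg.2.1 _ _ hu.1).trans (hCz u (hsub u hu))
  have hzy : IntegrableOn (fun s => |z (t - s) - y (t - s)|) (Icc 0 t) B.measure :=
    integrableOn_Icc_comp_sub (hzm.sub hym).abs fun u hu => by
      rw [abs_abs]
      exact (abs_sub _ _).trans (add_le_add (hCz u (hsub u hu)) (hCy u (hsub u hu)))
  have hgfy : IntegrableOn (fun s => |g (y (t - s)) (t - s) - f (y (t - s)) (t - s)|) (Icc 0 t)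
      B.measure := (hgy.sub hfy).abs
  have hlip : ∀ s ∈ Icc 0 t, |g (z (t - s)) (t - s) - f (y (t - s)) (t - s)| ≤
      |g (y (t - s)) (t - s) - f (y (t - s)) (t - s)| + |z (t - s) - y (t - s)| := fun s hs => by
    have := hg.2.2 (z (t - s)) (y (t - s)) (t - s) (by linarith [hs.2])
    linarith [abs_sub_le (g (z (t - s)) (t - s)) (g (y (t - s)) (t - s)) (f (y (t - s)) (t - s))]
  calc |z t - y t|
      = |(w t - x t)
          + ∫ s in Icc 0 t, (g (z (t - s)) (t - s) - f (y (t - s)) (t - s)) ∂B.measure| := by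
        rw [integral_sub hgz hfy, hz.2.2 t ht, hy.2.2 t ht]
        ring_nf
    _ ≤ |w t - x t|
          + ∫ s in Icc 0 t, |g (z (t - s)) (t - s) - f (y (t - s)) (t - s)| ∂B.measure :=
        (abs_add_le _ _).trans (add_le_add le_rfl abs_integral_le_integral_abs)
    _ ≤ |w t - x t| + ∫ s in Icc 0 t,
          (|g (y (t - s)) (t - s) - f (y (t - s)) (t - s)| + |z (t - s) - y (t - s)|) ∂B.measure :=
        add_le_add le_rfl
          (setIntegral_mono_on (hgz.sub hfy).abs (hgfy.add hzy) measurableSet_Icc hlip)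
    _ = _ := by rw [integral_add hgfy hzy, add_assoc]

end SolvesConv

theorem convolutionEquation_solutions_converge_uniformly_general
    (B : StieltjesFunction ℝ) (hB : IsNNDistFun B) (hB0 : B 0 < 1)
    (T : ℝ)
    (f : ℝ → ℝ → ℝ) (hf : GoodKernel f)
    (fn : ℕ → ℝ → ℝ → ℝ) (hfn : ∀ n, GoodKernel (fn n))
    (x : ℝ → ℝ) (xn : ℕ → ℝ → ℝ)
    (y : ℝ → ℝ) (hy : SolvesConv B T x f y)
    (yn : ℕ → ℝ → ℝ) (hyn : ∀ n, SolvesConv B T (xn n) (fn n) (yn n))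
    (hfconv : ∀ ε > (0 : ℝ), ∃ N : ℕ, ∀ n ≥ N, ∀ t ∈ Set.Icc (0 : ℝ) T,
      (∫ s in Set.Icc (0 : ℝ) t,
          |fn n (y (t - s)) (t - s) - f (y (t - s)) (t - s)| ∂B.measure) < ε)
    (hxconv : ∀ ε > (0 : ℝ), ∃ N : ℕ, ∀ n ≥ N, ∀ t ∈ Set.Icc (0 : ℝ) T,
      |xn n t - x t| < ε) :
    ∀ ε > (0 : ℝ), ∃ N : ℕ, ∀ n ≥ N, ∀ t ∈ Set.Icc (0 : ℝ) T,
      |yn n t - y t| < ε := by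
  have := hB.isProbabilityMeasure
  obtain ⟨C, hC0, hC⟩ :=
    exists_le_mul_of_le_add_setIntegral_sub (hB.measure_singleton_zero_lt_one hB0) T
  intro ε hε
  set η := ε / (C + 1)
  have hη : 0 < η := by positivity
  obtain ⟨N₁, hN₁⟩ := hfconv (η / 2) (half_pos hη)
  obtain ⟨N₂, hN₂⟩ := hxconv (η / 2) (half_pos hη)
  refine ⟨max N₁ N₂, fun n hn t ht => ?_⟩
  -- `y` and `yn n` are only Borel on `[0,T]`; their extensions by zero are Borel on `ℝ`.
  have hY := hy.indicator
  have hZ := (hyn n).indicator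
  have hrenewal : ∀ t ∈ Icc 0 T,
      |(Icc 0 T).indicator (yn n) t - (Icc 0 T).indicator y t| ≤ η + ∫ s in Icc 0 t,
        |(Icc 0 T).indicator (yn n) (t - s) - (Icc 0 T).indicator y (t - s)| ∂B.measure := by
    intro t ht
    have hdiff := hY.abs_sub_le_add_integral hZ hf (hfn n) hy.measurable_indicator
      (hyn n).measurable_indicator ht
    rw [setIntegral_Icc_indicator_comp_sub _ (fun a b => |fn n a b - f a b|) y ht] at hdiff
    linarith [hN₁ n (le_of_max_le_left hn) t ht, hN₂ n (le_of_max_le_right hn) t ht]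
  have hΔ := hC η _ hη.le (((hyn n).measurable_indicator.sub hy.measurable_indicator).abs)
    (fun _ _ => abs_nonneg _) (hY.bddAbove_abs_sub hZ) hrenewal t ht
  rw [Pi.sub_apply, indicator_of_mem ht, indicator_of_mem ht] at hΔ
  calc |yn n t - y t| ≤ C * η := hΔ
    _ < ε := by
      rw [mul_div_assoc', div_lt_iff₀ (by positivity)]
      linarith

/-- Uniform convergence of solutions of convolution equations (Lemma B.2, part 1). -/
theorem convolutionEquation_solutions_converge_uniformly
    (B : StieltjesFunction ℝ) (hB : IsNNDistFun B) (hB0 : B 0 < 1)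
    (T : ℝ) (hT : 0 < T)
    (f : ℝ → ℝ → ℝ) (hf : GoodKernel f)
    (fn : ℕ → ℝ → ℝ → ℝ) (hfn : ∀ n, GoodKernel (fn n))
    (x : ℝ → ℝ) (xn : ℕ → ℝ → ℝ)
    (hxm : Measurable (fun t : Set.Icc (0 : ℝ) T => x t))
    (hxb : ∃ C : ℝ, ∀ t ∈ Set.Icc (0 : ℝ) T, |x t| ≤ C)
    (hxnm : ∀ n, Measurable (fun t : Set.Icc (0 : ℝ) T => xn n t))
    (hxnb : ∀ n, ∃ C : ℝ, ∀ t ∈ Set.Icc (0 : ℝ) T, |xn n t| ≤ C)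
    (y : ℝ → ℝ) (hy : SolvesConv B T x f y)
    (yn : ℕ → ℝ → ℝ) (hyn : ∀ n, SolvesConv B T (xn n) (fn n) (yn n))
    (hfconv : ∀ ε > (0 : ℝ), ∃ N : ℕ, ∀ n ≥ N, ∀ t ∈ Set.Icc (0 : ℝ) T,
      (∫ s in Set.Icc (0 : ℝ) t,
          |fn n (y (t - s)) (t - s) - f (y (t - s)) (t - s)| ∂B.measure) < ε)
    (hxconv : ∀ ε > (0 : ℝ), ∃ N : ℕ, ∀ n ≥ N, ∀ t ∈ Set.Icc (0 : ℝ) T,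
      |xn n t - x t| < ε) :
    ∀ ε > (0 : ℝ), ∃ N : ℕ, ∀ n ≥ N, ∀ t ∈ Set.Icc (0 : ℝ) T,
      |yn n t - y t| < ε :=
  convolutionEquation_solutions_converge_uniformly_general B hB hB0 T f hf fn hfn x xn y hy yn hyn
    hfconv hxconv
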